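/- arXiv:1312.6700 — 2 statements merged into one kernel-verified Lean document; each statement's English description precedes it below -/
import Mathlib

section
/- Let x ≥ 2 be a natural number, let z₁ = 3x² + x, z₂ = 3x² - 2x, and β = z₁(3x - 2). For all m, m', d, d' with 0 ≤ m, m' < 3x - 2 and 0 ≤ d, d' < 3x + 1, if m ≠ m' then (z₁m + z₂d) mod β ≠ (z₁m' + z₂d') mod β. -/
/-!
Write `k = 3x - 2`, so that `z₂ = x k`, `z₁ = z₂ + 3x` and `β = z₂ (3x + 1)`. Reducing the
congruence modulo the divisor `z₂` of `β` kills the `d`-terms and leaves `3x m ≡ 3x m' [MOD x k]`;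
cancelling `x`, and then `3`, which is prime to `k`, gives `m ≡ m' [MOD k]`, hence `m = m'`.
-/

namespace Nat

theorem add_mul_add_mul_modEq (n t a b : ℕ) : (n + t) * a + n * b ≡ t * a [MOD n] := by
  have : (n + t) * a + n * b = t * a + (a + b) * n := by ring
  rw [ModEq, this, add_mul_mod_self_right]

theorem ModEq.of_mul_add_mul_modEq {x k c m m' d d' : ℕ} (hx : x ≠ 0) (hck : Coprime c k)
    (h : (x * k + c * x) * m + x * k * d ≡ (x * k + c * x) * m' + x * k * d' [MOD x * k]) :
    m ≡ m' [MOD k] := by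
  have hc : x * (c * m) ≡ x * (c * m') [MOD x * k] := by
    have := ((add_mul_add_mul_modEq _ _ m d).symm.trans h).trans (add_mul_add_mul_modEq _ _ m' d')
    rwa [mul_comm c x, mul_assoc, mul_assoc] at this
  exact (ModEq.mul_left_cancel' hx hc).cancel_left_of_coprime hck.symm

theorem three_mul_sq_sub_two_mul (x : ℕ) : 3 * x ^ 2 - 2 * x = x * (3 * x - 2) := by
  rw [Nat.mul_sub]; ring_nf

theorem three_mul_sq_add_self (x : ℕ) : 3 * x ^ 2 + x = x * (3 * x - 2) + 3 * x := by
  rcases x with _ | x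
  · rfl
  · rw [show 3 * (x + 1) - 2 = 3 * x + 1 by omega]; ring

theorem three_mul_sq_add_self_mul (x : ℕ) :
    (3 * x ^ 2 + x) * (3 * x - 2) = x * (3 * x - 2) * (3 * x + 1) := by
  rcases x with _ | x
  · rfl
  · rw [show 3 * (x + 1) - 2 = 3 * x + 1 by omega]; ring

theorem coprime_three_three_mul_sub_two {x : ℕ} (hx : x ≠ 0) : Coprime 3 (3 * x - 2) := by
  rw [Prime.coprime_iff_not_dvd prime_three]
  omega

end Nat

theorem shift_encodes_appendant_general (x : ℕ) (m m' d d' : ℕ)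
    (hm : m < 3 * x - 2) (hm' : m' < 3 * x - 2)
    (hne : m ≠ m') :
    ((3 * x ^ 2 + x) * m + (3 * x ^ 2 - 2 * x) * d) % ((3 * x ^ 2 + x) * (3 * x - 2)) ≠
      ((3 * x ^ 2 + x) * m' + (3 * x ^ 2 - 2 * x) * d') % ((3 * x ^ 2 + x) * (3 * x - 2)) := by
  intro h
  have hx : x ≠ 0 := by omega
  rw [Nat.three_mul_sq_add_self_mul, Nat.three_mul_sq_add_self,
    Nat.three_mul_sq_sub_two_mul] at h
  exact hne ((Nat.ModEq.of_mul_right _ h).of_mul_add_mul_modEq hx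
    (Nat.coprime_three_three_mul_sub_two hx) |>.eq_of_lt_of_lt hm hm')

/-- The shift value `(z₁*m + z₂*d) % β` uniquely determines the marked appendant index `m`,
where `z₁ = 3x² + x`, `z₂ = 3x² - 2x`, `β = z₁*(3x - 2)`. -/
theorem shift_encodes_appendant (x : ℕ) (hx : 2 ≤ x) (m m' d d' : ℕ)
    (hm : m < 3 * x - 2) (hm' : m' < 3 * x - 2) (hd : d < 3 * x + 1) (hd' : d' < 3 * x + 1)
    (hne : m ≠ m') :
    ((3 * x ^ 2 + x) * m + (3 * x ^ 2 - 2 * x) * d) % ((3 * x ^ 2 + x) * (3 * x - 2)) ≠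
      ((3 * x ^ 2 + x) * m' + (3 * x ^ 2 - 2 * x) * d') % ((3 * x ^ 2 + x) * (3 * x - 2)) :=
  shift_encodes_appendant_general x m m' d d' hm hm' hne
end

section
/- Let C = α₀, ..., α_{p-1} be a cyclic tag system and w = w₁...w_n a binary word. Define C_w to be the cyclic tag system with program ⟨w⟩, ⟨α₀⟩, ε, ⟨α₁⟩, ε, ..., ε, ⟨α_{p-1}⟩ where ⟨v₁...v_m⟩ := v₁0v₂0...v_m0. Then the computation of C_w on input dataword '1' simulates the computation of C on input w: after the first step of C_w, the dataword is ⟨w⟩, and thereafter every second symbol read by C_w corresponds to a symbol read by C, with the marked appendant of C_w at an encoded appendant ⟨α_j⟩ exactly when C's marker is at α_j. -/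
/-- One step of a cyclic tag system with program `P`: delete the first symbol of the
dataword, append the marked appendant iff that symbol is `1` (= `true`), and advance the
marker cyclically. The empty dataword gives a fixed configuration. -/
def ctsStep (P : List (List Bool)) : ℕ × List Bool → ℕ × List Bool
  | (m, []) => (m, [])
  | (m, a :: rest) => ((m + 1) % P.length, if a then rest ++ P.getD m [] else rest)

/-- The encoding `⟨v₁…v_n⟩ = v₁0v₂0…v_n0`. -/
def encW (w : List Bool) : List Bool := (w.map (fun a => [a, false])).flatten

/-- The program of `C_w`: `⟨w⟩, ⟨α₀⟩, ε, ⟨α₁⟩, ε, …, ε, ⟨α_{p-1}⟩`. -/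
def encProg (P : List (List Bool)) (w : List Bool) : List (List Bool) :=
  encW w ::
    match P with
    | [] => []
    | α :: rest => encW α :: (rest.map (fun a => [[], encW a])).flatten

/-!
In `C_w` the appendant `⟨α_m⟩` sits at the odd index `2m + 1` of a program of length `2p`.
Hence two steps of `C_w` on `⟨a d⟩ = a 0 ⟨d⟩` with marker `2m + 1` read `a` at `⟨α_m⟩`,
appending `⟨α_m⟩` iff `a = 1`, and then read the padding `0`, which appends nothing and moves the
marker on to `2 ((m + 1) mod p) + 1`: this is one step of `C` on `(m, a d)`, encoded. So the encoding `(m, d) ↦ (2m + 1, ⟨d⟩)` semiconjugates `C` to the square of `C_w`, and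
the first step of `C_w` on `1` produces the encoding of `C`'s initial configuration `(0, w)`.
-/

section FlattenPairs

variable {α β : Type*} (f g : α → β)

lemma length_flatten_map_pair (l : List α) :
    (l.map fun a => [f a, g a]).flatten.length = 2 * l.length := by
  induction l with
  | nil => rfl
  | cons a l ih =>
    simp only [List.map_cons, List.flatten_cons, List.length_append, List.length_cons,
      List.length_nil, ih]
    ring

lemma getElem?_flatten_map_pair_odd (l : List α) (m : ℕ) :
    (l.map fun a => [f a, g a]).flatten[2 * m + 1]? = l[m]?.map g := by
  induction l generalizing m with
  | nil => rfl
  | cons a l ih =>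
    cases m with
    | zero => rfl
    | succ k =>
      simp only [List.map_cons, List.flatten_cons, show 2 * (k + 1) + 1 = 2 * k + 1 + 2 by ring]
      simpa using ih k

end FlattenPairs

@[simp]
lemma ctsStep_cons (P : List (List Bool)) (m : ℕ) (a : Bool) (d : List Bool) :
    ctsStep P (m, a :: d) = ((m + 1) % P.length, if a then d ++ P.getD m [] else d) := rfl

@[simp]
lemma encW_cons (a : Bool) (d : List Bool) : encW (a :: d) = a :: false :: encW d := rfl

@[simp]
lemma encW_append (d e : List Bool) : encW (d ++ e) = encW d ++ encW e := by
  simp [encW]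

lemma length_encProg {P : List (List Bool)} (hP : P ≠ []) (w : List Bool) :
    (encProg P w).length = 2 * P.length := by
  obtain ⟨α, rest, rfl⟩ := List.exists_cons_of_ne_nil hP
  simp only [encProg, List.length_cons, length_flatten_map_pair]
  ring

lemma getD_encProg_odd (P : List (List Bool)) (w : List Bool) (m : ℕ) :
    (encProg P w).getD (2 * m + 1) [] = encW (P.getD m []) := by
  rcases P with _ | ⟨α, rest⟩
  · cases m <;> rfl
  rcases m with _ | k
  · rfl
  rw [show 2 * (k + 1) + 1 = 2 * k + 1 + 2 by ring]
  simp only [encProg, List.getD_eq_getElem?_getD, List.getElem?_cons_succ,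
    getElem?_flatten_map_pair_odd]
  cases rest[k]? <;> rfl

def encConfig (c : ℕ × List Bool) : ℕ × List Bool := (2 * c.1 + 1, encW c.2)

lemma two_mul_add_one_add_two_mod_two_mul (m p : ℕ) (hp : 0 < p) :
    ((2 * m + 1 + 1) % (2 * p) + 1) % (2 * p) = 2 * ((m + 1) % p) + 1 := by
  rw [show 2 * m + 1 + 1 = 2 * (m + 1) by ring, Nat.mul_mod_mul_left]
  have := Nat.mod_lt (m + 1) hp
  exact Nat.mod_eq_of_lt (by omega)

lemma semiconj_encConfig_ctsStep {P : List (List Bool)} (hP : P ≠ []) (w : List Bool) :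
    Function.Semiconj encConfig (ctsStep P) (ctsStep (encProg P w))^[2] := by
  rintro ⟨m, _ | ⟨a, d⟩⟩
  · rfl
  have hp : 0 < P.length := List.length_pos_iff.mpr hP
  have hmarker := two_mul_add_one_add_two_mod_two_mul m P.length hp
  cases a <;>
    simp only [encConfig, Function.iterate_succ_apply, Function.iterate_zero_apply, encW_cons,
      ctsStep_cons, getD_encProg_odd, length_encProg hP, hmarker, Bool.false_eq_true,
      if_true, if_false, List.cons_append, encW_append]

lemma ctsStep_encProg_start {P : List (List Bool)} (hP : P ≠ []) (w : List Bool) :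
    ctsStep (encProg P w) (0, [true]) = encConfig (0, w) := by
  have hp : 0 < P.length := List.length_pos_iff.mpr hP
  simp only [ctsStep_cons, length_encProg hP, if_true, List.nil_append]
  rw [Nat.mod_eq_of_lt (by omega)]
  rfl

/-- `C_w` on input dataword `1` simulates `C` on input `w`: after the first step the
dataword is `⟨w⟩` with the marker at `⟨α₀⟩`, and after `2n+1` steps of `C_w` the
configuration is exactly the encoding of the configuration of `C` after `n` steps:
the dataword is `⟨d⟩` and the marker is at position `2m+1` (the encoded appendant
`⟨α_m⟩`) where `(m, d)` is the configuration of `C` after `n` steps. -/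
theorem cts_simulation (P : List (List Bool)) (hP : P ≠ []) (w : List Bool) :
    ctsStep (encProg P w) (0, [true]) = (1, encW w) ∧
    ∀ n : ℕ,
      (ctsStep (encProg P w))^[2 * n + 1] (0, [true]) =
        (2 * ((ctsStep P)^[n] (0, w)).1 + 1, encW (((ctsStep P)^[n] (0, w)).2)) := by
  refine ⟨ctsStep_encProg_start hP w, fun n => ?_⟩
  rw [Function.iterate_succ_apply, ctsStep_encProg_start hP w, Function.iterate_mul]
  exact ((semiconj_encConfig_ctsStep hP w).iterate_right n (0, w)).symm
end
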